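/- Let a, b, τ > 0 with |1 − 1/τ²| < 1, s ∈ ℝ, σ > 0, and y ∈ ℝ; set a' = a + 1/2 and s' = s + y²/(2σ²). Then the marginal likelihood m(y) := ∫₀¹ ∫_ℝ N(y; β, σ²) N(β; 0, σ²(1/κ − 1)) π_{a,b,τ,s}(κ) dβ dκ satisfies m(y) = (2πσ²)^{−1/2} exp(−y²/(2σ²)) · [B(a', b)/B(a, b)] · Φ₁(b, 1; a'+b; s', 1−1/τ²) / Φ₁(b, 1; a+b; s, 1−1/τ²). -/

import Mathlib

open MeasureTheory Set

/-- The unnormalized hypergeometric-beta kernel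
`κ^{a−1} (1−κ)^{b−1} {1/τ² + (1 − 1/τ²)κ}^{−1} e^{−sκ}`. -/
noncomputable def hbKer (a b τ s κ : ℝ) : ℝ :=
  κ ^ (a - 1) * (1 - κ) ^ (b - 1) * (1 / τ ^ 2 + (1 - 1 / τ ^ 2) * κ)⁻¹ *
    Real.exp (-(s * κ))

/-- The normalizing constant `C(a,b,τ,s)`. -/
noncomputable def hbC (a b τ s : ℝ) : ℝ :=
  ∫ κ in Set.Ioo (0 : ℝ) 1, hbKer a b τ s κ

/-- The hypergeometric-beta density `π_{a,b,τ,s}` on `(0,1)`. -/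
noncomputable def hbPdf (a b τ s κ : ℝ) : ℝ :=
  (hbC a b τ s)⁻¹ * hbKer a b τ s κ

/-- The rising factorial `(q)_k = q (q+1) ⋯ (q+k−1)`. -/
noncomputable def risingFac (q : ℝ) (k : ℕ) : ℝ :=
  ∏ i ∈ Finset.range k, (q + (i : ℝ))

/-- The degenerate (Humbert) hypergeometric function of two variables
`Φ₁(α, β; γ; x, y) = Σ_{m,n≥0} [(α)_{m+n} (β)_n / ((γ)_{m+n} m! n!)] x^m y^n`. -/
noncomputable def Phi1 (α β γ x y : ℝ) : ℝ :=
  ∑' p : ℕ × ℕ,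
    risingFac α (p.1 + p.2) * risingFac β p.2 /
      (risingFac γ (p.1 + p.2) * (Nat.factorial p.1) * (Nat.factorial p.2)) *
      x ^ p.1 * y ^ p.2

/-- The Euler beta function `B(a,b) = Γ(a)Γ(b)/Γ(a+b)`. -/
noncomputable def betaFn (a b : ℝ) : ℝ :=
  Real.Gamma a * Real.Gamma b / Real.Gamma (a + b)

/-- The normal density with mean `μ` and variance `v`. -/
noncomputable def normPdf (y μ v : ℝ) : ℝ :=
  (2 * Real.pi * v) ^ (-(1 : ℝ) / 2) * Real.exp (-((y - μ) ^ 2) / (2 * v))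

/-- The joint density `f(β, κ) = N(y; β, σ²) N(β; 0, σ²(1/κ − 1)) π_{a,b,τ,s}(κ)`. -/
noncomputable def jointF (a b τ s σ y β κ : ℝ) : ℝ :=
  normPdf y β (σ ^ 2) * normPdf β 0 (σ ^ 2 * (1 / κ - 1)) * hbPdf a b τ s κ

/-! Integrating out `β` is a Gaussian convolution: `N(y; β, σ²) N(β; 0, σ²(1/κ − 1))`
integrates to `N(y; 0, σ²/κ) = (2πσ²)^{−1/2} κ^{1/2} e^{−y²κ/(2σ²)}`, and this factor turns
the kernel of `HB(a, b, τ, s)` into that of `HB(a + 1/2, b, τ, s')`. So `m(y)` is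
`(2πσ²)^{−1/2}` times the ratio of normalizing constants `C(a', b, τ, s') / C(a, b, τ, s)`.

For the constants put `z = 1 − 1/τ²`, so that `1/τ² + zκ = 1 − z(1 − κ)` and
`e^{−sκ} = e^{−s} e^{s(1−κ)}`. Expanding `e^{s(1−κ)} (1 − z(1−κ))⁻¹` as a double power series
in `1 − κ` and integrating termwise against `κ^{a−1} (1−κ)^{b−1}`, with
`B(a, b + k) = B(a, b) (b)_k / (a + b)_k`, gives
`C(a, b, τ, s) = e^{−s} B(a, b) Φ₁(b, 1; a + b; s, z)`. Termwise integration is legitimate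
because `|z| < 1` makes the series of integrals of absolute values converge. -/

open Real
open scoped Nat

noncomputable def betaKernel (a b x : ℝ) : ℝ :=
  x ^ (a - 1) * (1 - x) ^ (b - 1)

section Beta

variable {a b : ℝ}

lemma ofReal_betaKernel {x : ℝ} (hx₀ : 0 ≤ x) (hx₁ : x ≤ 1) :
    (betaKernel a b x : ℂ) = (x : ℂ) ^ ((a : ℂ) - 1) * (1 - (x : ℂ)) ^ ((b : ℂ) - 1) := by
  rw [betaKernel, Complex.ofReal_mul, Complex.ofReal_cpow hx₀,
    Complex.ofReal_cpow (sub_nonneg.2 hx₁)]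
  push_cast
  ring

lemma integrableOn_betaKernel (ha : 0 < a) (hb : 0 < b) :
    IntegrableOn (betaKernel a b) (Ioo 0 1) := by
  have hC : IntegrableOn (fun x : ℝ => (x : ℂ) ^ ((a : ℂ) - 1) * (1 - (x : ℂ)) ^ ((b : ℂ) - 1))
      (Ioc 0 1) :=
    (Complex.betaIntegral_convergent (by simpa using ha) (by simpa using hb)).1
  refine (IntegrableOn.congr_fun hC.re (fun x hx => ?_) measurableSet_Ioc).mono_set
    Ioo_subset_Ioc_self
  rw [← ofReal_betaKernel hx.1.le hx.2]
  exact Complex.ofReal_re _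

lemma integral_betaKernel (ha : 0 < a) (hb : 0 < b) :
    ∫ x in Ioo 0 1, betaKernel a b x = betaFn a b := by
  have h : Complex.betaIntegral a b = ((∫ x in Ioo 0 1, betaKernel a b x : ℝ) : ℂ) := by
    rw [Complex.betaIntegral, intervalIntegral.integral_of_le zero_le_one,
      integral_Ioc_eq_integral_Ioo, ← integral_complex_ofReal]
    exact setIntegral_congr_fun measurableSet_Ioo fun x hx =>
      (ofReal_betaKernel hx.1.le hx.2.le).symm
  rw [show betaFn a b = ProbabilityTheory.beta a b from rfl,
    ProbabilityTheory.beta_eq_betaIntegralReal a b ha hb, h, Complex.ofReal_re]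

lemma betaKernel_pos {x : ℝ} (hx : x ∈ Ioo 0 1) : 0 < betaKernel a b x :=
  mul_pos (rpow_pos_of_pos hx.1 _) (rpow_pos_of_pos (sub_pos.2 hx.2) _)

lemma betaKernel_mul_pow {x : ℝ} (hx : x < 1) (k : ℕ) :
    betaKernel a b x * (1 - x) ^ k = betaKernel a (b + k) x := by
  rw [betaKernel, betaKernel, mul_assoc, ← rpow_natCast, ← rpow_add (sub_pos.2 hx)]
  ring_nf

lemma betaKernel_add_nat_le {x : ℝ} (hx : x ∈ Ioo 0 1) (k : ℕ) :
    betaKernel a (b + k) x ≤ betaKernel a b x := by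
  rw [← betaKernel_mul_pow hx.2]
  exact mul_le_of_le_one_right (betaKernel_pos hx).le
    (pow_le_one₀ (sub_nonneg.2 hx.2.le) (by linarith [hx.1]))

end Beta

lemma risingFac_pos {q : ℝ} (hq : 0 < q) (k : ℕ) : 0 < risingFac q k :=
  Finset.prod_pos fun _ _ => by positivity

lemma risingFac_succ (q : ℝ) (k : ℕ) : risingFac q (k + 1) = risingFac q k * (q + k) :=
  Finset.prod_range_succ _ _

lemma risingFac_one (n : ℕ) : risingFac 1 n = n ! := by
  induction n with
  | zero => simp [risingFac]
  | succ n ih =>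
    rw [risingFac_succ, ih, Nat.factorial_succ]
    push_cast
    ring

lemma Gamma_add_nat_eq_risingFac_mul {q : ℝ} (hq : 0 < q) (k : ℕ) :
    Gamma (q + k) = risingFac q k * Gamma q := by
  induction k with
  | zero => simp [risingFac]
  | succ k ih =>
    rw [Nat.cast_succ, ← add_assoc, Gamma_add_one (by positivity), ih, risingFac_succ]
    ring

lemma betaFn_add_nat {a b : ℝ} (ha : 0 < a) (hb : 0 < b) (k : ℕ) :
    betaFn a (b + k) = betaFn a b * risingFac b k / risingFac (a + b) k := by
  have hab : 0 < a + b := add_pos ha hb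
  have hΓ := (Gamma_pos_of_pos hab).ne'
  have hr := (risingFac_pos hab k).ne'
  rw [betaFn, betaFn, ← add_assoc, Gamma_add_nat_eq_risingFac_mul hb,
    Gamma_add_nat_eq_risingFac_mul hab]
  field_simp

lemma exp_mul_mul_inv_one_sub_eq_tsum {s z w : ℝ} (hzw : |z * w| < 1) :
    exp (s * w) * (1 - z * w)⁻¹ =
      ∑' p : ℕ × ℕ, s ^ p.1 / p.1 ! * z ^ p.2 * w ^ (p.1 + p.2) := by
  have hexp : Summable fun m : ℕ => ‖(s * w) ^ m / (m ! : ℝ)‖ := by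
    simpa only [norm_eq_abs, abs_div, abs_pow, Nat.abs_cast] using
      summable_pow_div_factorial |s * w|
  have hgeom : Summable fun n : ℕ => ‖(z * w) ^ n‖ := by
    simpa only [norm_pow, norm_eq_abs] using summable_geometric_of_lt_one (abs_nonneg _) hzw
  rw [exp_eq_exp_ℝ, NormedSpace.exp_eq_tsum_div, ← tsum_geometric_of_abs_lt_one hzw,
    tsum_mul_tsum_of_summable_norm hexp hgeom]
  refine tsum_congr fun p => ?_
  rw [mul_pow, mul_pow, pow_add]
  ring

noncomputable def phi1Coeff (α β γ : ℝ) (p : ℕ × ℕ) : ℝ :=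
  risingFac α (p.1 + p.2) * risingFac β p.2 / (risingFac γ (p.1 + p.2) * p.1 ! * p.2 !)

lemma Phi1_eq_tsum (α β γ x y : ℝ) :
    Phi1 α β γ x y = ∑' p : ℕ × ℕ, phi1Coeff α β γ p * x ^ p.1 * y ^ p.2 :=
  rfl

noncomputable def phi1Integrand (a b s z : ℝ) (p : ℕ × ℕ) (x : ℝ) : ℝ :=
  s ^ p.1 / p.1 ! * z ^ p.2 * betaKernel a (b + (p.1 + p.2 : ℕ)) x

section Phi1Integral

variable {a b s z : ℝ}

lemma betaKernel_mul_exp_mul_inv_eq_tsum (hz : |z| < 1) {x : ℝ} (hx : x ∈ Ioo 0 1) :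
    betaKernel a b x * (exp (s * (1 - x)) * (1 - z * (1 - x))⁻¹) =
      ∑' p, phi1Integrand a b s z p x := by
  have hzx : |z * (1 - x)| < 1 := by
    rw [abs_mul, abs_of_pos (sub_pos.2 hx.2)]
    nlinarith [abs_nonneg z, hx.1]
  rw [exp_mul_mul_inv_one_sub_eq_tsum hzx, ← tsum_mul_left]
  refine tsum_congr fun p => ?_
  rw [phi1Integrand, ← betaKernel_mul_pow hx.2]
  ring

lemma integrableOn_phi1Integrand (ha : 0 < a) (hb : 0 < b) (p : ℕ × ℕ) :
    IntegrableOn (phi1Integrand a b s z p) (Ioo 0 1) :=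
  (integrableOn_betaKernel ha (by positivity)).const_mul _

lemma integral_phi1Integrand (ha : 0 < a) (hb : 0 < b) (p : ℕ × ℕ) :
    ∫ x in Ioo 0 1, phi1Integrand a b s z p x =
      betaFn a b * (phi1Coeff b 1 (a + b) p * s ^ p.1 * z ^ p.2) := by
  have hab := (risingFac_pos (add_pos ha hb) (p.1 + p.2)).ne'
  simp only [phi1Integrand]
  rw [integral_const_mul, integral_betaKernel ha (by positivity), betaFn_add_nat ha hb,
    phi1Coeff, risingFac_one]
  field_simp

lemma integral_norm_phi1Integrand_le (ha : 0 < a) (hb : 0 < b) (p : ℕ × ℕ) :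
    ∫ x in Ioo 0 1, ‖phi1Integrand a b s z p x‖ ≤
      ‖s ^ p.1 / p.1 ! * z ^ p.2‖ * betaFn a b := by
  have hnorm : ∀ x ∈ Ioo (0 : ℝ) 1, ‖phi1Integrand a b s z p x‖ =
      ‖s ^ p.1 / p.1 ! * z ^ p.2‖ * betaKernel a (b + (p.1 + p.2 : ℕ)) x := fun x hx => by
    rw [phi1Integrand, norm_mul, norm_of_nonneg (betaKernel_pos hx).le]
  rw [setIntegral_congr_fun measurableSet_Ioo hnorm, integral_const_mul,
    ← integral_betaKernel ha hb]
  exact mul_le_mul_of_nonneg_left (setIntegral_mono_on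
    (integrableOn_betaKernel ha (by positivity)) (integrableOn_betaKernel ha hb)
    measurableSet_Ioo fun x hx => betaKernel_add_nat_le hx _) (norm_nonneg _)

theorem integral_betaKernel_mul_exp_mul_inv (ha : 0 < a) (hb : 0 < b) (hz : |z| < 1) :
    ∫ x in Ioo 0 1, betaKernel a b x * (exp (s * (1 - x)) * (1 - z * (1 - x))⁻¹) =
      betaFn a b * Phi1 b 1 (a + b) s z := by
  have hcoeff : Summable fun p : ℕ × ℕ => ‖s ^ p.1 / p.1 ! * z ^ p.2‖ := by
    refine Summable.mul_norm (f := fun m : ℕ => s ^ m / (m ! : ℝ)) (g := (z ^ ·)) ?_ ?_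
    · simpa only [norm_div, norm_pow, norm_eq_abs, Nat.abs_cast] using
        summable_pow_div_factorial |s|
    · simpa only [norm_pow, norm_eq_abs] using summable_geometric_of_lt_one (abs_nonneg _) hz
  have hsum : Summable fun p => ∫ x in Ioo 0 1, ‖phi1Integrand a b s z p x‖ :=
    (hcoeff.mul_right _).of_nonneg_of_le (fun _ => integral_nonneg fun _ => norm_nonneg _)
      (integral_norm_phi1Integrand_le ha hb)
  rw [setIntegral_congr_fun measurableSet_Ioo fun x hx =>
      betaKernel_mul_exp_mul_inv_eq_tsum hz hx,
    ← integral_tsum_of_summable_integral_norm (integrableOn_phi1Integrand ha hb) hsum,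
    Phi1_eq_tsum, ← tsum_mul_left]
  exact tsum_congr fun p => integral_phi1Integrand ha hb p

end Phi1Integral

lemma hbKer_eq (a b τ s x : ℝ) :
    hbKer a b τ s x = exp (-s) *
      (betaKernel a b x * (exp (s * (1 - x)) * (1 - (1 - 1 / τ ^ 2) * (1 - x))⁻¹)) := by
  rw [hbKer, betaKernel,
    show 1 / τ ^ 2 + (1 - 1 / τ ^ 2) * x = 1 - (1 - 1 / τ ^ 2) * (1 - x) by ring,
    show -(s * x) = -s + s * (1 - x) by ring, exp_add]
  ring

theorem hbC_eq {a b τ s : ℝ} (ha : 0 < a) (hb : 0 < b) (hτ : |1 - 1 / τ ^ 2| < 1) :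
    hbC a b τ s = exp (-s) * (betaFn a b * Phi1 b 1 (a + b) s (1 - 1 / τ ^ 2)) := by
  simp only [hbC, hbKer_eq]
  rw [integral_const_mul, integral_betaKernel_mul_exp_mul_inv ha hb hτ]

lemma rpow_neg_half_eq_sqrt_inv {x : ℝ} (hx : 0 ≤ x) : x ^ (-(1 : ℝ) / 2) = √x⁻¹ := by
  rw [neg_div, rpow_neg hx, ← sqrt_eq_rpow, sqrt_inv]

theorem integral_normPdf_mul_normPdf (y m : ℝ) {v₁ v₂ : ℝ} (h₁ : 0 < v₁) (h₂ : 0 < v₂) :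
    ∫ β, normPdf y β v₁ * normPdf β m v₂ = normPdf y m (v₁ + v₂) := by
  have hv : 0 < v₁ + v₂ := add_pos h₁ h₂
  set c := (v₁ + v₂) / (2 * v₁ * v₂) with hc
  set μ := (v₂ * y + v₁ * m) / (v₁ + v₂) with hμ
  -- complete the square in `β`
  have hsq : ∀ β, normPdf y β v₁ * normPdf β m v₂ =
      (2 * π * v₁) ^ (-(1 : ℝ) / 2) * (2 * π * v₂) ^ (-(1 : ℝ) / 2) *
        exp (-((y - m) ^ 2) / (2 * (v₁ + v₂))) * exp (-c * (β - μ) ^ 2) := fun β => by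
    have hexp : -((y - β) ^ 2) / (2 * v₁) + -((β - m) ^ 2) / (2 * v₂) =
        -((y - m) ^ 2) / (2 * (v₁ + v₂)) + -c * (β - μ) ^ 2 := by
      rw [hc, hμ]
      field_simp
      ring
    rw [normPdf, normPdf, ← mul_assoc, mul_right_comm _ (exp _), mul_assoc _ (exp _), ← exp_add,
      hexp, exp_add]
    ring
  have hconst :
      (2 * π * v₁) ^ (-(1 : ℝ) / 2) * (2 * π * v₂) ^ (-(1 : ℝ) / 2) * √(π / c) =
      (2 * π * (v₁ + v₂)) ^ (-(1 : ℝ) / 2) := by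
    rw [rpow_neg_half_eq_sqrt_inv (by positivity), rpow_neg_half_eq_sqrt_inv (by positivity),
      rpow_neg_half_eq_sqrt_inv (by positivity), ← sqrt_mul (by positivity),
      ← sqrt_mul (by positivity), hc]
    congr 1
    field_simp
  simp_rw [hsq]
  rw [integral_const_mul, integral_sub_right_eq_self (fun β => exp (-c * β ^ 2)) μ,
    integral_gaussian, normPdf, ← hconst]
  ring

lemma normPdf_zero_div (y : ℝ) {v κ : ℝ} (hv : 0 < v) (hκ : 0 < κ) :
    normPdf y 0 (v / κ) =
      (2 * π * v) ^ (-(1 : ℝ) / 2) * (κ ^ (1 / 2 : ℝ) * exp (-(y ^ 2 / (2 * v) * κ))) := by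
  rw [normPdf, show 2 * π * (v / κ) = 2 * π * v / κ by ring, div_rpow (by positivity) hκ.le,
    div_eq_mul_inv, ← rpow_neg hκ.le]
  norm_num
  field_simp

lemma hbKer_tilt (a b τ s c t : ℝ) {x : ℝ} (hx : 0 < x) :
    x ^ c * exp (-(t * x)) * hbKer a b τ s x = hbKer (a + c) b τ (s + t) x := by
  rw [hbKer, hbKer, show a + c - 1 = c + (a - 1) by ring, rpow_add hx,
    show -((s + t) * x) = -(t * x) + -(s * x) by ring, exp_add]
  ring

lemma integral_jointF {a b τ s σ y κ : ℝ} (hσ : 0 < σ) (hκ : κ ∈ Ioo 0 1) :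
    ∫ β, jointF a b τ s σ y β κ = (hbC a b τ s)⁻¹ *
      ((2 * π * σ ^ 2) ^ (-(1 : ℝ) / 2) *
        hbKer (a + 1 / 2) b τ (s + y ^ 2 / (2 * σ ^ 2)) κ) := by
  have hσ2 : 0 < σ ^ 2 := by positivity
  have hv : 0 < σ ^ 2 * (1 / κ - 1) :=
    mul_pos hσ2 (sub_pos.2 ((one_lt_div hκ.1).2 hκ.2))
  have hvar : σ ^ 2 + σ ^ 2 * (1 / κ - 1) = σ ^ 2 / κ := by
    field_simp
    ring
  simp only [jointF]
  rw [integral_mul_const, integral_normPdf_mul_normPdf y 0 hσ2 hv, hvar,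
    normPdf_zero_div y hσ2 hκ.1, hbPdf, ← hbKer_tilt _ _ _ _ _ _ hκ.1]
  ring

theorem hb_marginal_likelihood_general (a b τ s σ y : ℝ) (ha : 0 < a) (hb : 0 < b)
    (hτ' : |1 - 1 / τ ^ 2| < 1) (hσ : 0 < σ) :
    (∫ κ in Set.Ioo (0 : ℝ) 1, ∫ β : ℝ, jointF a b τ s σ y β κ) =
      (2 * Real.pi * σ ^ 2) ^ (-(1 : ℝ) / 2) * Real.exp (-(y ^ 2) / (2 * σ ^ 2)) *
        (betaFn (a + 1 / 2) b / betaFn a b) *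
        (Phi1 b 1 (a + 1 / 2 + b) (s + y ^ 2 / (2 * σ ^ 2)) (1 - 1 / τ ^ 2) /
          Phi1 b 1 (a + b) s (1 - 1 / τ ^ 2)) := by
  rw [setIntegral_congr_fun measurableSet_Ioo fun κ hκ => integral_jointF hσ hκ,
    integral_const_mul, integral_const_mul, ← hbC, hbC_eq ha hb hτ',
    hbC_eq (by positivity) hb hτ', neg_add, exp_add, neg_div]
  field_simp

theorem hb_marginal_likelihood (a b τ s σ y : ℝ) (ha : 0 < a) (hb : 0 < b)
    (hτ : 0 < τ) (hτ' : |1 - 1 / τ ^ 2| < 1) (hσ : 0 < σ) :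
    (∫ κ in Set.Ioo (0 : ℝ) 1, ∫ β : ℝ, jointF a b τ s σ y β κ) =
      (2 * Real.pi * σ ^ 2) ^ (-(1 : ℝ) / 2) * Real.exp (-(y ^ 2) / (2 * σ ^ 2)) *
        (betaFn (a + 1 / 2) b / betaFn a b) *
        (Phi1 b 1 (a + 1 / 2 + b) (s + y ^ 2 / (2 * σ ^ 2)) (1 - 1 / τ ^ 2) /
          Phi1 b 1 (a + b) s (1 - 1 / τ ^ 2)) :=
  hb_marginal_likelihood_general a b τ s σ y ha hb hτ' hσ
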